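/- Let f^k(ρ) = v^k_max ρ (1 − ρ/ρ^k_max) for k ∈ {1,2,3} be Greenshields fluxes, let ρ_0^1, ρ_0^2, ρ_0^3 ∈ ℝ, λ > 0, and let r_1, r_2 ≥ 0 with r_1 + r_2 = 1. Suppose r_1 (f^1)'(ρ_0^1) + r_2 (f^2)'(ρ_0^2) + (f^3)'(ρ_0^3) ≠ 0. Then there exists ε > 0 such that for all G_0, G_1 ∈ ℝ with |G_0| < ε and |G_1| < ε the reduced coupling equation G_0 + d_1(r_1(σ − G_1/λ)) + d_2(r_2(σ − G_1/λ)) = d_3(σ) has at least one real solution σ ∈ ℝ. -/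

import Mathlib

/-!
The Greenshields fluxes are quadratic, so at `G₀ = G₁ = 0` the defect
`G₀ + d₁ + d₂ - d₃` of the coupling equation is `A σ² - S σ`, where `S` is the
nonvanishing combination of derivatives. Since `0` is a simple root, this quadratic
takes opposite signs at `±δ` for small `δ > 0`. The defect depends continuously on
`(G₀, G₁, σ)`, so the sign change persists for small `(G₀, G₁)`, and the intermediate
value theorem provides a root.
-/

/-- Greenshields flux `f(ρ) = vmax ρ (1 - ρ/ρmax)`. -/
noncomputable def gflux (vmax ρmax ρ : ℝ) : ℝ := vmax * ρ * (1 - ρ / ρmax)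

/-- Derivative of the Greenshields flux: `f'(ρ) = vmax (1 - 2ρ/ρmax)`. -/
noncomputable def gflux' (vmax ρmax ρ : ℝ) : ℝ := vmax * (1 - 2 * ρ / ρmax)

open Filter Topology Function

lemma continuous_gflux (vmax ρmax : ℝ) : Continuous (gflux vmax ρmax) := by
  unfold gflux
  fun_prop

lemma gflux_sub_sub_gflux (vmax ρmax ρ x : ℝ) :
    gflux vmax ρmax (ρ - x) - gflux vmax ρmax ρ
      = -(gflux' vmax ρmax ρ * x) - vmax / ρmax * x ^ 2 := by
  unfold gflux gflux'
  ring

lemma gflux_add_sub_gflux (vmax ρmax ρ x : ℝ) :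
    gflux vmax ρmax (ρ + x) - gflux vmax ρmax ρ
      = gflux' vmax ρmax ρ * x - vmax / ρmax * x ^ 2 := by
  unfold gflux gflux'
  ring

lemma exists_mul_neg_of_simple_root (A S : ℝ) (hS : S ≠ 0) :
    ∃ a b : ℝ, (A * a ^ 2 - S * a) * (A * b ^ 2 - S * b) < 0 := by
  obtain ⟨δ, hδ, hAδ⟩ := exists_pos_mul_lt (abs_pos.mpr hS) |A|
  have hsq : (A * δ) ^ 2 < S ^ 2 := by
    rw [sq_lt_sq, abs_mul, abs_of_pos hδ]
    exact hAδ
  refine ⟨δ, -δ, ?_⟩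
  calc (A * δ ^ 2 - S * δ) * (A * (-δ) ^ 2 - S * -δ) = δ ^ 2 * ((A * δ) ^ 2 - S ^ 2) := by ring
    _ < 0 := mul_neg_of_pos_of_neg (by positivity) (sub_neg.mpr hsq)

lemma exists_eq_zero_of_mul_neg {f : ℝ → ℝ} (hf : Continuous f) {a b : ℝ}
    (h : f a * f b < 0) : ∃ σ, f σ = 0 := by
  have h0 : (0 : ℝ) ∈ Set.uIcc (f a) (f b) := by
    rcases mul_neg_iff.mp h with ⟨ha, hb⟩ | ⟨ha, hb⟩
    · exact Set.mem_uIcc_of_ge hb.le ha.le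
    · exact Set.mem_uIcc_of_le ha.le hb.le
  obtain ⟨σ, -, hσ⟩ := intermediate_value_uIcc hf.continuousOn h0
  exact ⟨σ, hσ⟩

lemma eventually_exists_eq_zero_of_mul_neg {X : Type*} [TopologicalSpace X]
    {F : X → ℝ → ℝ} (hF : Continuous (uncurry F)) {x₀ : X} {a b : ℝ}
    (h : F x₀ a * F x₀ b < 0) : ∀ᶠ x in 𝓝 x₀, ∃ σ, F x σ = 0 := by
  have hprod : Continuous fun x ↦ F x a * F x b :=
    (hF.uncurry_right a).mul (hF.uncurry_right b)
  filter_upwards [hprod.continuousAt.eventually_lt continuousAt_const h] with x hx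
  exact exists_eq_zero_of_mul_neg (hF.uncurry_left x) hx

theorem stmt3_general
    (v1max v2max v3max ρ1max ρ2max ρ3max : ℝ)
    (ρ01 ρ02 ρ03 : ℝ)
    (lam : ℝ)
    (r1 r2 : ℝ)
    (d1 d2 d3 : ℝ → ℝ)
    (hd1 : ∀ σ, d1 σ = gflux v1max ρ1max (ρ01 - σ) - gflux v1max ρ1max ρ01)
    (hd2 : ∀ σ, d2 σ = gflux v2max ρ2max (ρ02 - σ) - gflux v2max ρ2max ρ02)
    (hd3 : ∀ σ, d3 σ = gflux v3max ρ3max (ρ03 + σ) - gflux v3max ρ3max ρ03)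
    (hne : r1 * gflux' v1max ρ1max ρ01 + r2 * gflux' v2max ρ2max ρ02
        + gflux' v3max ρ3max ρ03 ≠ 0) :
    ∃ ε > (0 : ℝ), ∀ G0 G1 : ℝ, |G0| < ε → |G1| < ε →
      ∃ σ : ℝ, G0 + d1 (r1 * (σ - G1 / lam)) + d2 (r2 * (σ - G1 / lam)) = d3 σ := by
  obtain rfl : d1 = _ := funext hd1
  obtain rfl : d2 = _ := funext hd2
  obtain rfl : d3 = _ := funext hd3
  set defect : ℝ × ℝ → ℝ → ℝ := fun G σ ↦
    G.1 + (gflux v1max ρ1max (ρ01 - r1 * (σ - G.2 / lam)) - gflux v1max ρ1max ρ01)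
      + (gflux v2max ρ2max (ρ02 - r2 * (σ - G.2 / lam)) - gflux v2max ρ2max ρ02)
      - (gflux v3max ρ3max (ρ03 + σ) - gflux v3max ρ3max ρ03)
  have hcont : Continuous (uncurry defect) := by
    have := continuous_gflux v1max ρ1max
    have := continuous_gflux v2max ρ2max
    have := continuous_gflux v3max ρ3max
    fun_prop
  have hdefect_zero : ∀ σ, defect 0 σ
      = (v3max / ρ3max - v1max / ρ1max * r1 ^ 2 - v2max / ρ2max * r2 ^ 2) * σ ^ 2
        - (r1 * gflux' v1max ρ1max ρ01 + r2 * gflux' v2max ρ2max ρ02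
          + gflux' v3max ρ3max ρ03) * σ := by
    intro σ
    simp only [defect, Prod.fst_zero, Prod.snd_zero, zero_div, sub_zero, gflux_sub_sub_gflux,
      gflux_add_sub_gflux]
    ring
  obtain ⟨a, b, hab⟩ := exists_mul_neg_of_simple_root _ _ hne
  rw [← hdefect_zero, ← hdefect_zero] at hab
  obtain ⟨ε, hε, hball⟩ :=
    Metric.eventually_nhds_iff_ball.mp (eventually_exists_eq_zero_of_mul_neg hcont hab)
  refine ⟨ε, hε, fun G0 G1 hG0 hG1 ↦ ?_⟩
  obtain ⟨σ, hσ⟩ := hball (G0, G1) (by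
    simpa [Metric.mem_ball, Prod.dist_eq, Real.dist_eq] using max_lt hG0 hG1)
  exact ⟨σ, sub_eq_zero.mp hσ⟩

/-- Remark after Lemma 1: if `r1 (f¹)'(ρ₀¹) + r2 (f²)'(ρ₀²) + (f³)'(ρ₀³)` does not
vanish, the reduced coupling equation has at least one real solution whenever
`|G0|` and `|G1|` are sufficiently small. -/
theorem stmt3
    (v1max v2max v3max ρ1max ρ2max ρ3max : ℝ)
    (hv1 : 0 < v1max) (hv2 : 0 < v2max) (hv3 : 0 < v3max)
    (hρ1 : 0 < ρ1max) (hρ2 : 0 < ρ2max) (hρ3 : 0 < ρ3max)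
    (ρ01 ρ02 ρ03 : ℝ)
    (lam : ℝ) (hlam : 0 < lam)
    (r1 r2 : ℝ) (hr1 : 0 ≤ r1) (hr2 : 0 ≤ r2) (hrsum : r1 + r2 = 1)
    (d1 d2 d3 : ℝ → ℝ)
    (hd1 : ∀ σ, d1 σ = gflux v1max ρ1max (ρ01 - σ) - gflux v1max ρ1max ρ01)
    (hd2 : ∀ σ, d2 σ = gflux v2max ρ2max (ρ02 - σ) - gflux v2max ρ2max ρ02)
    (hd3 : ∀ σ, d3 σ = gflux v3max ρ3max (ρ03 + σ) - gflux v3max ρ3max ρ03)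
    (hne : r1 * gflux' v1max ρ1max ρ01 + r2 * gflux' v2max ρ2max ρ02
        + gflux' v3max ρ3max ρ03 ≠ 0) :
    ∃ ε > (0 : ℝ), ∀ G0 G1 : ℝ, |G0| < ε → |G1| < ε →
      ∃ σ : ℝ, G0 + d1 (r1 * (σ - G1 / lam)) + d2 (r2 * (σ - G1 / lam)) = d3 σ :=
  stmt3_general v1max v2max v3max ρ1max ρ2max ρ3max ρ01 ρ02 ρ03 lam r1 r2 d1 d2 d3 hd1 hd2 hd3 hne
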